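/- Let D be the triple system whose blocks are the supports of all weight-3 codewords of the binary code C with parity check matrix H_{n,t} (1 ≤ t ≤ n-1). Then: (i) the blocks contained in V_0 form the complete 2-(2^t - 1, 3, 2^t - 3) design on V_0; (ii) two points in the same group lie in no block disjoint from V_0, while two points in different groups lie in exactly 2^t blocks disjoint from V_0; (iii) every other block consists of two points in the same group together with one point of V_0, and any two points in the same group lie in exactly 2^t - 1 such blocks. -/
import Mathlib


abbrev binIdx (n t : ℕ) :=
  Fin (2 ^ t - 1) ⊕ ({p : Fin (n - t) → ZMod 2 // p ≠ 0} × Fin (2 ^ t))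

def binCol {n t : ℕ} : binIdx n t → (Fin (n - t) → ZMod 2) :=
  Sum.elim (fun _ => 0) (fun q => q.1.1)

def binGrp {n t : ℕ} : binIdx n t → Option (Fin (n - t) → ZMod 2) :=
  Sum.elim (fun _ => none) (fun q => some q.1.1)

/-- A block of the triple system `D`: the support of a weight-3 codeword of the
binary code with parity check matrix `H_{n,t}`. -/
def isBlk {n t : ℕ} (b : Finset (binIdx n t)) : Prop :=
  b.card = 3 ∧ ∑ j ∈ b, binCol j = 0

section helpers

lemma third_elt {α : Type*} [DecidableEq α] {b : Finset α} (hb : b.card = 3)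
    {x y : α} (hx : x ∈ b) (hy : y ∈ b) (hxy : x ≠ y) :
    ∃ z, z ≠ x ∧ z ≠ y ∧ b = {x, y, z} := by
  have hsub : ({x, y} : Finset α) ⊆ b := by
    intro a ha; simp only [Finset.mem_insert, Finset.mem_singleton] at ha
    rcases ha with h | h <;> simp [h, hx, hy]
  have hcard : (b \ {x, y}).card = 1 := by
    rw [Finset.card_sdiff_of_subset hsub, hb,
      Finset.card_insert_of_notMem (by simp [hxy]), Finset.card_singleton]
  obtain ⟨z, hz⟩ := Finset.card_eq_one.mp hcard
  have hzmem : z ∈ b \ ({x, y} : Finset α) := by rw [hz]; simp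
  rw [Finset.mem_sdiff, Finset.mem_insert, Finset.mem_singleton] at hzmem
  push_neg at hzmem
  refine ⟨z, hzmem.2.1, hzmem.2.2, ?_⟩
  have hu := Finset.union_sdiff_of_subset hsub
  rw [hz] at hu
  rw [← hu]
  ext a; simp only [Finset.mem_union, Finset.mem_insert, Finset.mem_singleton]; tauto

lemma card_triple {α : Type*} [DecidableEq α] {x y z : α}
    (hxy : x ≠ y) (hxz : x ≠ z) (hyz : y ≠ z) :
    ({x, y, z} : Finset α).card = 3 := by
  rw [Finset.card_insert_of_notMem (by simp [hxy, hxz]),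
    Finset.card_insert_of_notMem (by simp [hyz]), Finset.card_singleton]

lemma sum_triple {α M : Type*} [DecidableEq α] [AddCommMonoid M] {x y z : α}
    (hxy : x ≠ y) (hxz : x ≠ z) (hyz : y ≠ z) (f : α → M) :
    ∑ j ∈ ({x, y, z} : Finset α), f j = f x + f y + f z := by
  rw [show ({x, y, z} : Finset α) = insert x (insert y {z}) from rfl,
    Finset.sum_insert (by simp [hxy, hxz]), Finset.sum_insert (by simp [hyz]),
    Finset.sum_singleton, add_assoc]

lemma zmod2_third {m : ℕ} {a b c : Fin m → ZMod 2} (h : a + b + c = 0) : c = a + b := by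
  funext i
  have h' := congrFun h i
  simp only [Pi.add_apply, Pi.zero_apply] at h'
  show c i = a i + b i
  revert h'
  generalize a i = u; generalize b i = v; generalize c i = w
  revert u v w; decide

lemma zmod2_sum {m : ℕ} (a b : Fin m → ZMod 2) : a + b + (a + b) = 0 := by
  funext i
  simp only [Pi.add_apply, Pi.zero_apply]
  generalize a i = u; generalize b i = v
  revert u v; decide

lemma zmod2_add_self {m : ℕ} (a : Fin m → ZMod 2) : a + a = 0 := by
  funext i
  simp only [Pi.add_apply, Pi.zero_apply]
  generalize a i = u
  revert u; decide

lemma zmod2_cancel {m : ℕ} {a b : Fin m → ZMod 2} (h : a = a + b) : b = 0 := by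
  funext i
  have h' := congrFun h i
  simp only [Pi.add_apply, Pi.zero_apply] at *
  revert h'
  generalize a i = u; generalize b i = v
  revert u v; decide

end helpers

theorem stmt6 (n t : ℕ) (ht1 : 1 ≤ t) (ht2 : t ≤ n - 1) :
    -- (i) the blocks contained in V₀ are exactly all 3-subsets of V₀,
    -- i.e. they form the complete 2-(2^t-1, 3, 2^t-3) design on V₀
    (∀ b : Finset (binIdx n t), (∀ j ∈ b, binGrp j = none) →
      (isBlk b ↔ b.card = 3)) ∧
    -- (ii) blocks disjoint from V₀: none through two points of the same group,
    -- exactly 2^t through two points of different groups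
    (∀ x y : binIdx n t, x ≠ y → binGrp x ≠ none → binGrp y ≠ none →
      Nat.card {b : Finset (binIdx n t) //
          isBlk b ∧ x ∈ b ∧ y ∈ b ∧ ∀ j ∈ b, binGrp j ≠ none}
        = if binGrp x = binGrp y then 0 else 2 ^ t) ∧
    -- (iii) every other block consists of two points of one group and a point
    -- of V₀ ...
    (∀ b : Finset (binIdx n t), isBlk b →
      ¬ (∀ j ∈ b, binGrp j = none) → ¬ (∀ j ∈ b, binGrp j ≠ none) →
      ∃ (u v w : binIdx n t) (p : Fin (n - t) → ZMod 2),
        b = {u, v, w} ∧ v ≠ w ∧ binGrp u = none ∧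
        binGrp v = some p ∧ binGrp w = some p) ∧
    -- ... and any two points of the same group lie in exactly 2^t - 1 such blocks
    (∀ x y : binIdx n t, x ≠ y → binGrp x ≠ none → binGrp x = binGrp y →
      Nat.card {b : Finset (binIdx n t) //
          isBlk b ∧ x ∈ b ∧ y ∈ b ∧ ∃ j ∈ b, binGrp j = none}
        = 2 ^ t - 1) := by
  refine ⟨?_, ?_, ?_, ?_⟩
  -- (i)
  · intro b hb
    constructor
    · exact fun h => h.1
    · intro h
      refine ⟨h, ?_⟩
      rw [Finset.sum_congr rfl (fun j hj => ?_), Finset.sum_const_zero]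
      have hj' := hb j hj
      cases j with
      | inl i => rfl
      | inr q => simp [binGrp] at hj'
  -- (ii)
  · intro x y hxy hx hy
    obtain ⟨qx, rfl⟩ : ∃ q, x = Sum.inr q := by
      cases x with
      | inl i => simp [binGrp] at hx
      | inr q => exact ⟨q, rfl⟩
    obtain ⟨qy, rfl⟩ : ∃ q, y = Sum.inr q := by
      cases y with
      | inl i => simp [binGrp] at hy
      | inr q => exact ⟨q, rfl⟩
    by_cases hgrp : binGrp (Sum.inr qx : binIdx n t) = binGrp (Sum.inr qy)
    · rw [if_pos hgrp]
      have hpp : qx.1.1 = qy.1.1 := by simpa [binGrp] using hgrp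
      have : IsEmpty {b : Finset (binIdx n t) //
          isBlk b ∧ Sum.inr qx ∈ b ∧ Sum.inr qy ∈ b ∧ ∀ j ∈ b, binGrp j ≠ none} := by
        constructor
        rintro ⟨b, ⟨hc, hs⟩, hxb, hyb, hall⟩
        obtain ⟨z, hzx, hzy, rfl⟩ := third_elt hc hxb hyb hxy
        rw [sum_triple hxy (Ne.symm hzx) (Ne.symm hzy)] at hs
        have hz := zmod2_third hs
        have hz0 : binCol z = 0 := by
          rw [hz]; show qx.1.1 + qy.1.1 = 0
          rw [hpp]; exact zmod2_add_self _
        have hzmem : z ∈ ({Sum.inr qx, Sum.inr qy, z} : Finset (binIdx n t)) := by simp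
        have hzg := hall z hzmem
        cases z with
        | inl i => simp [binGrp] at hzg
        | inr q => exact q.1.2 hz0
      exact Nat.card_of_isEmpty
    · rw [if_neg hgrp]
      have hpq : qx.1.1 ≠ qy.1.1 := by
        intro h; exact hgrp (by simp [binGrp, h])
      have hpq0 : qx.1.1 + qy.1.1 ≠ 0 := by
        intro h; apply hpq
        funext i
        have h' := congrFun h i
        simp only [Pi.add_apply, Pi.zero_apply] at h'
        revert h'
        generalize qx.1.1 i = u; generalize qy.1.1 i = v; revert u v; decide
      have key : ∀ (i : Fin (2 ^ t)),
          (Sum.inr qx : binIdx n t) ≠ Sum.inr (⟨⟨qx.1.1 + qy.1.1, hpq0⟩, i⟩) ∧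
          (Sum.inr qy : binIdx n t) ≠ Sum.inr (⟨⟨qx.1.1 + qy.1.1, hpq0⟩, i⟩) := by
        intro i
        constructor
        · intro h
          have h2 : qx.1.1 = qx.1.1 + qy.1.1 := by
            have := congrArg Prod.fst (Sum.inr_injective h)
            exact congrArg Subtype.val this
          exact qy.1.2 (zmod2_cancel h2)
        · intro h
          have h2 : qy.1.1 = qx.1.1 + qy.1.1 := by
            have := congrArg Prod.fst (Sum.inr_injective h)
            exact congrArg Subtype.val this
          apply qx.1.2
          exact zmod2_cancel (h2.trans (add_comm _ _))
      set f : Fin (2 ^ t) → {b : Finset (binIdx n t) //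
          isBlk b ∧ Sum.inr qx ∈ b ∧ Sum.inr qy ∈ b ∧ ∀ j ∈ b, binGrp j ≠ none} :=
        fun i => ⟨{Sum.inr qx, Sum.inr qy, Sum.inr (⟨⟨qx.1.1 + qy.1.1, hpq0⟩, i⟩)}, by
          obtain ⟨hxz, hyz⟩ := key i
          refine ⟨⟨card_triple hxy hxz hyz, ?_⟩, by simp, by simp, ?_⟩
          · rw [sum_triple hxy hxz hyz]
            exact zmod2_sum _ _
          · intro j hj
            simp only [Finset.mem_insert, Finset.mem_singleton] at hj
            rcases hj with rfl | rfl | rfl <;> simp [binGrp]⟩ with hf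
      have hbij : Function.Bijective f := by
        constructor
        · intro i i' h
          have h' := congrArg Subtype.val h
          simp only [hf] at h'
          have hmem : (Sum.inr (⟨⟨qx.1.1 + qy.1.1, hpq0⟩, i⟩) : binIdx n t) ∈
              ({Sum.inr qx, Sum.inr qy,
                Sum.inr (⟨⟨qx.1.1 + qy.1.1, hpq0⟩, i'⟩)} : Finset (binIdx n t)) := by
            rw [← h']; simp
          simp only [Finset.mem_insert, Finset.mem_singleton] at hmem
          rcases hmem with h1 | h1 | h1
          · exact absurd h1.symm (key i).1
          · exact absurd h1.symm (key i).2
          · exact congrArg Prod.snd (Sum.inr_injective h1)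
        · rintro ⟨b, ⟨hc, hs⟩, hxb, hyb, hall⟩
          obtain ⟨z, hzx, hzy, rfl⟩ := third_elt hc hxb hyb hxy
          rw [sum_triple hxy (Ne.symm hzx) (Ne.symm hzy)] at hs
          have hz := zmod2_third hs
          have hzmem : z ∈ ({Sum.inr qx, Sum.inr qy, z} : Finset (binIdx n t)) := by simp
          obtain ⟨qz, rfl⟩ : ∃ q, z = Sum.inr q := by
            cases z with
            | inl i => exact absurd rfl (hall _ hzmem)
            | inr q => exact ⟨q, rfl⟩
          have hq1 : qz.1 = ⟨qx.1.1 + qy.1.1, hpq0⟩ := Subtype.ext hz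
          refine ⟨qz.2, ?_⟩
          apply Subtype.ext
          show ({Sum.inr qx, Sum.inr qy,
            Sum.inr (⟨⟨qx.1.1 + qy.1.1, hpq0⟩, qz.2⟩)} : Finset (binIdx n t)) = _
          have : (⟨⟨qx.1.1 + qy.1.1, hpq0⟩, qz.2⟩ :
              {p : Fin (n - t) → ZMod 2 // p ≠ 0} × Fin (2 ^ t)) = qz := by
            exact Prod.ext hq1.symm rfl
          rw [this]
      rw [← Nat.card_eq_of_bijective f hbij, Nat.card_eq_fintype_card, Fintype.card_fin]
  -- (iii) first half
  · intro b hb hnall hnex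
    obtain ⟨hc, hs⟩ := hb
    push_neg at hnall hnex
    obtain ⟨u, hub, hu⟩ := hnex
    obtain ⟨v, hvb, hv⟩ := hnall
    have huv : u ≠ v := by intro h; rw [h] at hu; exact hv hu
    obtain ⟨z, hzu, hzv, rfl⟩ := third_elt hc hub hvb huv
    rw [sum_triple huv (Ne.symm hzu) (Ne.symm hzv)] at hs
    have hz := zmod2_third hs
    obtain ⟨iu, rfl⟩ : ∃ i, u = Sum.inl i := by
      cases u with
      | inl i => exact ⟨i, rfl⟩
      | inr q => simp [binGrp] at hu
    obtain ⟨qv, rfl⟩ : ∃ q, v = Sum.inr q := by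
      cases v with
      | inl i => simp [binGrp] at hv
      | inr q => exact ⟨q, rfl⟩
    have hzcol : binCol z = qv.1.1 := by
      rw [hz]; show (0 : Fin (n - t) → ZMod 2) + qv.1.1 = qv.1.1; rw [zero_add]
    obtain ⟨qz, rfl⟩ : ∃ q, z = Sum.inr q := by
      cases z with
      | inl i => exact absurd hzcol.symm qv.1.2
      | inr q => exact ⟨q, rfl⟩
    exact ⟨Sum.inl iu, Sum.inr qv, Sum.inr qz, qv.1.1, rfl, Ne.symm hzv, rfl, rfl,
      congrArg some hzcol⟩
  -- (iii) second half
  · intro x y hxy hx hgrp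
    obtain ⟨qx, rfl⟩ : ∃ q, x = Sum.inr q := by
      cases x with
      | inl i => simp [binGrp] at hx
      | inr q => exact ⟨q, rfl⟩
    obtain ⟨qy, rfl⟩ : ∃ q, y = Sum.inr q := by
      cases y with
      | inl i => simp [binGrp, eq_comm] at hgrp
      | inr q => exact ⟨q, rfl⟩
    have hpp : qx.1.1 = qy.1.1 := by simpa [binGrp] using hgrp
    have key : ∀ (i : Fin (2 ^ t - 1)),
        (Sum.inr qx : binIdx n t) ≠ Sum.inl i ∧ (Sum.inr qy : binIdx n t) ≠ Sum.inl i := by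
      intro i; exact ⟨by simp, by simp⟩
    set f : Fin (2 ^ t - 1) → {b : Finset (binIdx n t) //
        isBlk b ∧ Sum.inr qx ∈ b ∧ Sum.inr qy ∈ b ∧ ∃ j ∈ b, binGrp j = none} :=
      fun i => ⟨{Sum.inr qx, Sum.inr qy, Sum.inl i}, by
        obtain ⟨hxz, hyz⟩ := key i
        refine ⟨⟨card_triple hxy hxz hyz, ?_⟩, by simp, by simp, ⟨Sum.inl i, by simp, rfl⟩⟩
        rw [sum_triple hxy hxz hyz]
        show qx.1.1 + qy.1.1 + 0 = 0
        rw [add_zero, hpp]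
        exact zmod2_add_self _⟩ with hf
    have hbij : Function.Bijective f := by
      constructor
      · intro i i' h
        have h' := congrArg Subtype.val h
        simp only [hf] at h'
        have hmem : (Sum.inl i : binIdx n t) ∈
            ({Sum.inr qx, Sum.inr qy, Sum.inl i'} : Finset (binIdx n t)) := by
          rw [← h']; simp
        simp only [Finset.mem_insert, Finset.mem_singleton] at hmem
        rcases hmem with h1 | h1 | h1
        · exact absurd h1 (by simp)
        · exact absurd h1 (by simp)
        · exact Fin.val_injective (congrArg (Sum.elim Fin.val (fun _ => 0)) h1)
      · rintro ⟨b, ⟨hc, hs⟩, hxb, hyb, hex⟩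
        obtain ⟨z, hzx, hzy, rfl⟩ := third_elt hc hxb hyb hxy
        rw [sum_triple hxy (Ne.symm hzx) (Ne.symm hzy)] at hs
        have hz := zmod2_third hs
        have hz0 : binCol z = 0 := by
          rw [hz]; show qx.1.1 + qy.1.1 = 0
          rw [hpp]; exact zmod2_add_self _
        obtain ⟨i, rfl⟩ : ∃ i, z = Sum.inl i := by
          cases z with
          | inl i => exact ⟨i, rfl⟩
          | inr q => exact absurd hz0 q.1.2
        exact ⟨i, rfl⟩
    rw [← Nat.card_eq_of_bijective f hbij, Nat.card_eq_fintype_card, Fintype.card_fin]
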